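/- arXiv:1608.03428 — 3 statements merged into one kernel-verified Lean document; each statement's English description precedes it below -/
import Mathlib

section
/- Let H ∈ (0,1), γ_t = A t^{-1/2-H} V_t + B t^{1/2-H} where A = (2H-1)/C ≠ 0, B constant, and V_t is the Dobrić–Ojeda process with E[V_t²] = c_Ψ² c_M t^{2H}. Then for every t > 0, E[exp((1/2)∫₀^t γ_s² ds)] = ∞. -/
/-!
Since `V` is centred, `E[γ_s²] ≥ A² s^(-1-2H) E[V_s²] = A² c_Ψ² c_M / s`, so by Tonelli
`E[∫₀ᵗ γ_s² ds] ≥ ∫₀ᵗ A² c_Ψ² c_M / s ds = ∞`. As `exp x ≥ x`, the expectation of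
`exp(½ ∫₀ᵗ γ_s² ds)` is infinite as well.
-/

open MeasureTheory ProbabilityTheory Real Set
open scoped ENNReal

lemma lintegral_Ioc_inv_eq_top {t : ℝ} (ht : 0 < t) :
    ∫⁻ s in Ioc (0 : ℝ) t, ENNReal.ofReal s⁻¹ = ∞ := by
  by_contra hfin
  have hnot : ¬ IntegrableOn (fun s : ℝ => s⁻¹) (Ioc 0 t) := by
    rw [← intervalIntegrable_iff_integrableOn_Ioc_of_le ht.le, intervalIntegrable_inv_iff]
    simp [ht.ne, ht.le]
  refine hnot ⟨by fun_prop, ?_⟩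
  rw [hasFiniteIntegral_iff_ofReal]
  · exact lt_top_iff_ne_top.2 hfin
  · filter_upwards [ae_restrict_mem measurableSet_Ioc] with s hs using inv_nonneg.2 hs.1.le

lemma lintegral_lintegral_Ioc_eq_top_of_inv_le {Ω : Type*} [MeasurableSpace Ω]
    {μ : Measure Ω} [SFinite μ] {f : ℝ → Ω → ℝ≥0∞} (hf : Measurable (Function.uncurry f))
    {K t : ℝ} (hK : 0 < K) (ht : 0 < t)
    (hle : ∀ s ∈ Ioc (0 : ℝ) t, ENNReal.ofReal (K * s⁻¹) ≤ ∫⁻ ω, f s ω ∂μ) :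
    ∫⁻ ω, (∫⁻ s in Ioc (0 : ℝ) t, f s ω) ∂μ = ∞ := by
  rw [lintegral_lintegral_swap (f := fun ω s => f s ω) (hf.comp measurable_swap).aemeasurable,
    eq_top_iff]
  calc ∞ = ENNReal.ofReal K * ∫⁻ s in Ioc (0 : ℝ) t, ENNReal.ofReal s⁻¹ := by
        rw [lintegral_Ioc_inv_eq_top ht, ENNReal.mul_top (by simpa using hK)]
    _ = ∫⁻ s in Ioc (0 : ℝ) t, ENNReal.ofReal (K * s⁻¹) := by
        rw [← lintegral_const_mul' _ _ ENNReal.ofReal_ne_top]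
        simp only [ENNReal.ofReal_mul hK.le]
    _ ≤ ∫⁻ s in Ioc (0 : ℝ) t, ∫⁻ ω, f s ω ∂μ := setLIntegral_mono' measurableSet_Ioc hle

lemma lintegral_ite_exp_eq_top {Ω : Type*} [MeasurableSpace Ω] {μ : Measure Ω}
    {F : Ω → ℝ≥0∞} {c : ℝ} (hc : 0 < c) (hF : ∫⁻ ω, F ω ∂μ = ∞) :
    ∫⁻ ω, (if F ω = ∞ then ∞ else ENNReal.ofReal (exp (c * (F ω).toReal))) ∂μ = ∞ := by
  have hpt : ∀ x : ℝ≥0∞,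
      ENNReal.ofReal c * x ≤ if x = ∞ then ∞ else ENNReal.ofReal (exp (c * x.toReal)) := by
    intro x
    split_ifs with hx
    · exact le_top
    · rw [← ENNReal.ofReal_toReal hx, ← ENNReal.ofReal_mul hc.le, ENNReal.toReal_ofReal (by simp)]
      exact ENNReal.ofReal_le_ofReal (by linarith [add_one_le_exp (c * x.toReal)])
  rw [eq_top_iff]
  calc ∞ = ∫⁻ ω, ENNReal.ofReal c * F ω ∂μ := by
        rw [lintegral_const_mul' _ _ ENNReal.ofReal_ne_top, hF,
          ENNReal.mul_top (by simpa using hc)]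
    _ ≤ _ := lintegral_mono fun ω => hpt (F ω)

lemma ofReal_sq_mul_integral_sq_le_lintegral {Ω : Type*} [MeasurableSpace Ω] {μ : Measure Ω}
    [IsProbabilityMeasure μ] {X : Ω → ℝ} (hX : MemLp X 2 μ) (hX0 : μ[X] = 0) (a b : ℝ) :
    ENNReal.ofReal (a ^ 2 * μ[X ^ 2]) ≤ ∫⁻ ω, ENNReal.ofReal ((a * X ω + b) ^ 2) ∂μ := by
  have hY : MemLp (fun ω => a * X ω + b) 2 μ := (hX.const_mul a).add (memLp_const b)
  rw [← ofReal_integral_eq_lintegral_ofReal hY.integrable_sq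
    (ae_of_all _ fun _ => sq_nonneg _)]
  refine ENNReal.ofReal_le_ofReal ?_
  calc a ^ 2 * μ[X ^ 2] = a ^ 2 * Var[X; μ] := by rw [variance_eq_sub hX, hX0]; ring
    _ = Var[fun ω => a * X ω + b; μ] := by
        rw [variance_add_const (hX.const_mul a).aestronglyMeasurable, variance_const_mul]
    _ ≤ ∫ ω, (a * X ω + b) ^ 2 ∂μ := variance_le_expectation_sq hY.aestronglyMeasurable

lemma rpow_neg_half_sub_sq_mul_rpow_two_mul {s : ℝ} (hs : 0 < s) (H : ℝ) :
    (s ^ (-(1 / 2) - H)) ^ 2 * s ^ (2 * H) = s⁻¹ := by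
  rw [← rpow_natCast, ← rpow_mul hs.le, ← rpow_add hs, ← rpow_neg_one]
  norm_num
  ring_nf

theorem stmt8_general
    {Ω : Type*} [MeasurableSpace Ω] (P : Measure Ω) [IsProbabilityMeasure P]
    (H c_Ψ c_M A B : ℝ)
    (hcΨ : 0 < c_Ψ) (hcM : 0 < c_M)
    (hAne : A ≠ 0)
    (V : ℝ → Ω → ℝ) (hVmeas : Measurable (Function.uncurry V))
    (hVcentered : ∀ s : ℝ, 0 < s → ∫ ω, V s ω ∂P = 0)
    (hVvar : ∀ s : ℝ, 0 < s → ∫ ω, (V s ω) ^ 2 ∂P = c_Ψ ^ 2 * c_M * s ^ (2 * H)) :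
    ∀ t : ℝ, 0 < t →
      (∫⁻ ω,
        (if (∫⁻ s in Set.Ioc (0 : ℝ) t,
              ENNReal.ofReal ((A * s ^ (-(1 / 2) - H) * V s ω + B * s ^ (1 / 2 - H)) ^ 2)) = ⊤
          then ⊤
          else ENNReal.ofReal (Real.exp (2⁻¹ *
            (∫⁻ s in Set.Ioc (0 : ℝ) t,
              ENNReal.ofReal
                ((A * s ^ (-(1 / 2) - H) * V s ω + B * s ^ (1 / 2 - H)) ^ 2)).toReal)))
        ∂P) = ⊤ := by
  intro t ht
  refine lintegral_ite_exp_eq_top (by norm_num) ?_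
  refine lintegral_lintegral_Ioc_eq_top_of_inv_le (K := A ^ 2 * (c_Ψ ^ 2 * c_M))
    (by fun_prop) (by positivity) ht fun s hs => ?_
  have hVs : MemLp (V s) 2 P := by
    refine (memLp_two_iff_integrable_sq hVmeas.of_uncurry_left.aestronglyMeasurable).2
      (Integrable.of_integral_ne_zero ?_)
    rw [hVvar s hs.1]
    have := rpow_pos_of_pos hs.1 (2 * H)
    positivity
  calc ENNReal.ofReal (A ^ 2 * (c_Ψ ^ 2 * c_M) * s⁻¹)
      = ENNReal.ofReal ((A * s ^ (-(1 / 2) - H)) ^ 2 * P[V s ^ 2]) := by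
        rw [← rpow_neg_half_sub_sq_mul_rpow_two_mul hs.1 H]
        simp only [Pi.pow_apply, hVvar s hs.1]
        ring_nf
    _ ≤ _ := ofReal_sq_mul_integral_sq_le_lintegral hVs (hVcentered s hs.1) _ _

open scoped Classical in
/-- For `γ_t = A t^(-1/2-H) V_t + B t^(1/2-H)` with `A = (2H-1)/C ≠ 0`
and `V` the Dobrić–Ojeda process (a centered process with `E[V_t²] = c_Ψ² c_M t^(2H)`),
Novikov's condition fails: `E[exp((1/2)∫₀ᵗ γ_s² ds)] = ∞` for every `t > 0`.
The inner integral is taken as a Lebesgue integral in `[0,∞]`, and `exp(½·∞)` is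
interpreted as `∞`. -/
theorem stmt8
    {Ω : Type*} [MeasurableSpace Ω] (P : Measure Ω) [IsProbabilityMeasure P]
    (H c_Ψ c_M C A B : ℝ) (hH : H ∈ Set.Ioo (0 : ℝ) 1)
    (hcΨ : 0 < c_Ψ) (hcM : 0 < c_M) (hCne : C ≠ 0)
    (hA : A = (2 * H - 1) / C) (hAne : A ≠ 0)
    (V : ℝ → Ω → ℝ) (hVmeas : Measurable (Function.uncurry V))
    (hVcentered : ∀ s : ℝ, 0 < s → ∫ ω, V s ω ∂P = 0)
    (hVvar : ∀ s : ℝ, 0 < s → ∫ ω, (V s ω) ^ 2 ∂P = c_Ψ ^ 2 * c_M * s ^ (2 * H)) :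
    ∀ t : ℝ, 0 < t →
      (∫⁻ ω,
        (if (∫⁻ s in Set.Ioc (0 : ℝ) t,
              ENNReal.ofReal ((A * s ^ (-(1 / 2) - H) * V s ω + B * s ^ (1 / 2 - H)) ^ 2)) = ⊤
          then ⊤
          else ENNReal.ofReal (Real.exp (2⁻¹ *
            (∫⁻ s in Set.Ioc (0 : ℝ) t,
              ENNReal.ofReal
                ((A * s ^ (-(1 / 2) - H) * V s ω + B * s ^ (1 / 2 - H)) ^ 2)).toReal)))
        ∂P) = ⊤ :=
  stmt8_general P H c_Ψ c_M A B hcΨ hcM hAne V hVmeas hVcentered hVvar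
end

section
/- Let V_t = C∫₀^t s^{H-1/2}dW_s + c_Ψ(2H-1)∫₀^t s^{2H-2}M_s ds and V^ε_t = C∫₀^t s^{H-1/2}dW_s + c_Ψ(2H-1)∫₀^t s^{2H-2}M_s 1_{[ε,∞)}(s) ds. Then E[ sup_{t≥0} (V_t - V^ε_t)² ] ≤ (c_Ψ² c_M (2H-1)²/H²) ε^{2H}, and hence V^ε → V uniformly in t in L² as ε → 0. -/
/-!
The difference `V_t - V^ε_t = (2H-1) ∫₀^{t∧ε} s⁻¹ V_s ds` is dominated, uniformly in `t`, by
`|2H-1| A` with `A = ∫₀^ε s⁻¹ |V_s| ds`. Cauchy–Schwarz against the weight `s^(H-1)` gives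
`A² ≤ (ε^H / H) ∫₀^ε s^(-1-H) V_s² ds`, and by Tonelli and `E[V_s²] = c_Ψ² c_M s^(2H)` the
expectation of the last integral is `c_Ψ² c_M ε^H / H`.
-/

open MeasureTheory ProbabilityTheory Real Filter Set Topology Function

lemma lintegral_Ioc_rpow_sub_one {H ε : ℝ} (hH : 0 < H) (hε : 0 ≤ ε) :
    ∫⁻ s in Ioc 0 ε, ENNReal.ofReal (s ^ (H - 1)) = ENNReal.ofReal (ε ^ H / H) := by
  have hint : IntegrableOn (fun s : ℝ => s ^ (H - 1)) (Ioc 0 ε) :=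
    (intervalIntegral.intervalIntegrable_rpow' (by linarith)).1
  rw [← ofReal_integral_eq_lintegral_ofReal hint
    ((ae_restrict_iff' measurableSet_Ioc).2 (ae_of_all _ fun s hs => rpow_nonneg hs.1.le _)),
    ← intervalIntegral.integral_of_le hε, integral_rpow (Or.inl (by linarith)),
    sub_add_cancel, zero_rpow hH.ne', sub_zero]

lemma ofReal_inv_mul_abs_eq_rpow_half_mul {s : ℝ} (hs : 0 < s) (H x : ℝ) :
    ENNReal.ofReal (s⁻¹ * |x|) =
      ENNReal.ofReal (s ^ (H - 1)) ^ (1 / 2 : ℝ) *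
        ENNReal.ofReal (s ^ (-1 - H) * x ^ 2) ^ (1 / 2 : ℝ) := by
  have hprod : s ^ (H - 1) * (s ^ (-1 - H) * x ^ 2) = (s⁻¹ * |x|) ^ 2 := by
    rw [← mul_assoc, ← rpow_add hs, mul_pow, sq_abs, show H - 1 + (-1 - H) = -2 by ring,
      rpow_neg hs.le, inv_pow, show (2 : ℝ) = (2 : ℕ) by norm_num, rpow_natCast]
  rw [← ENNReal.mul_rpow_of_nonneg _ _ (by norm_num), ← ENNReal.ofReal_mul (by positivity),
    hprod, ENNReal.ofReal_rpow_of_nonneg (by positivity) (by norm_num), ← sqrt_eq_rpow,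
    sqrt_sq (by positivity)]

lemma sq_lintegral_inv_mul_abs_le {f : ℝ → ℝ} (hf : Measurable f) {H ε : ℝ} (hH : 0 < H)
    (hε : 0 ≤ ε) :
    (∫⁻ s in Ioc 0 ε, ENNReal.ofReal (s⁻¹ * |f s|)) ^ 2 ≤
      ENNReal.ofReal (ε ^ H / H) *
        ∫⁻ s in Ioc 0 ε, ENNReal.ofReal (s ^ (-1 - H) * f s ^ 2) := by
  rw [setLIntegral_congr_fun measurableSet_Ioc
      fun s hs => ofReal_inv_mul_abs_eq_rpow_half_mul hs.1 H (f s),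
    ← lintegral_Ioc_rpow_sub_one hH hε]
  calc _ ≤ ((∫⁻ s in Ioc 0 ε, ENNReal.ofReal (s ^ (H - 1))) ^ (1 / 2 : ℝ) *
          (∫⁻ s in Ioc 0 ε, ENNReal.ofReal (s ^ (-1 - H) * f s ^ 2)) ^ (1 / 2 : ℝ)) ^ 2 := by
        gcongr
        exact ENNReal.lintegral_mul_norm_pow_le (by fun_prop) (by fun_prop) (by norm_num)
          (by norm_num) (by norm_num)
    _ = _ := by
        rw [mul_pow, ← ENNReal.rpow_mul_natCast, ← ENNReal.rpow_mul_natCast]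
        norm_num

lemma lintegral_sq_lintegral_inv_mul_abs_le {Ω : Type*} [MeasurableSpace Ω] {P : Measure Ω}
    [SFinite P] {X : ℝ → Ω → ℝ} (hX : Measurable (uncurry X)) {H ε K : ℝ} (hH : 0 < H)
    (hε : 0 ≤ ε) (hmom : ∀ s ∈ Ioc 0 ε,
      ∫⁻ ω, ENNReal.ofReal (X s ω ^ 2) ∂P ≤ ENNReal.ofReal (K * s ^ (2 * H))) :
    ∫⁻ ω, (∫⁻ s in Ioc 0 ε, ENNReal.ofReal (s⁻¹ * |X s ω|)) ^ 2 ∂P ≤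
      ENNReal.ofReal (K * (ε ^ H / H) ^ 2) := by
  have hweighted : ∀ s ∈ Ioc 0 ε, ∫⁻ ω, ENNReal.ofReal (s ^ (-1 - H) * X s ω ^ 2) ∂P ≤
      ENNReal.ofReal (s ^ (H - 1)) * ENNReal.ofReal K := by
    intro s hs
    have hs0 : 0 ≤ s ^ (-1 - H) := rpow_nonneg hs.1.le _
    calc _ = ENNReal.ofReal (s ^ (-1 - H)) * ∫⁻ ω, ENNReal.ofReal (X s ω ^ 2) ∂P := by
          simp_rw [ENNReal.ofReal_mul hs0]
          exact lintegral_const_mul' _ _ ENNReal.ofReal_ne_top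
      _ ≤ ENNReal.ofReal (s ^ (-1 - H)) * ENNReal.ofReal (K * s ^ (2 * H)) := by
          gcongr; exact hmom s hs
      _ = _ := by
          rw [← ENNReal.ofReal_mul hs0, ← ENNReal.ofReal_mul (rpow_nonneg hs.1.le _)]
          congr 1
          rw [mul_left_comm, ← rpow_add hs.1, mul_comm]
          ring_nf
  calc _ ≤ ∫⁻ ω, ENNReal.ofReal (ε ^ H / H) *
        (∫⁻ s in Ioc 0 ε, ENNReal.ofReal (s ^ (-1 - H) * X s ω ^ 2)) ∂P :=
        lintegral_mono fun ω => sq_lintegral_inv_mul_abs_le (hX.comp measurable_prodMk_right) hH hε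
    _ = ENNReal.ofReal (ε ^ H / H) *
        ∫⁻ s in Ioc 0 ε, ∫⁻ ω, ENNReal.ofReal (s ^ (-1 - H) * X s ω ^ 2) ∂P := by
        rw [lintegral_const_mul' _ _ ENNReal.ofReal_ne_top, lintegral_lintegral_swap]
        exact (by fun_prop : Measurable fun p : Ω × ℝ =>
          ENNReal.ofReal (p.2 ^ (-1 - H) * X p.2 p.1 ^ 2)).aemeasurable
    _ ≤ ENNReal.ofReal (ε ^ H / H) *
        ∫⁻ s in Ioc 0 ε, ENNReal.ofReal (s ^ (H - 1)) * ENNReal.ofReal K := by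
        gcongr 1
        exact setLIntegral_mono' measurableSet_Ioc hweighted
    _ = _ := by
        rw [lintegral_mul_const' _ _ ENNReal.ofReal_ne_top, lintegral_Ioc_rpow_sub_one hH hε,
          ← ENNReal.ofReal_mul (by positivity), ← ENNReal.ofReal_mul (by positivity)]
        congr 1
        ring

lemma ofReal_sq_setIntegral_inv_mul_le {f : ℝ → ℝ} {a ε : ℝ} (ha : a ≤ ε) :
    ENNReal.ofReal ((∫ s in Ioc 0 a, s⁻¹ * f s) ^ 2) ≤
      (∫⁻ s in Ioc 0 ε, ENNReal.ofReal (s⁻¹ * |f s|)) ^ 2 := by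
  rw [← sq_abs, ENNReal.ofReal_pow (abs_nonneg _), ← enorm_eq_ofReal_abs]
  gcongr
  calc _ ≤ ∫⁻ s in Ioc 0 a, ‖s⁻¹ * f s‖ₑ := enorm_integral_le_lintegral_enorm _
    _ = ∫⁻ s in Ioc 0 a, ENNReal.ofReal (s⁻¹ * |f s|) := by
        refine setLIntegral_congr_fun measurableSet_Ioc fun s hs => ?_
        rw [enorm_eq_ofReal_abs, abs_mul, abs_inv, abs_of_pos hs.1]
    _ ≤ _ := lintegral_mono_set (Ioc_subset_Ioc_right ha)

lemma tendsto_ofReal_mul_rpow_nhdsGT_zero (K : ℝ) {p : ℝ} (hp : 0 < p) :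
    Tendsto (fun ε : ℝ => ENNReal.ofReal (K * ε ^ p)) (𝓝[>] 0) (𝓝 0) := by
  have h := ENNReal.tendsto_ofReal
    ((continuousAt_rpow_const 0 p (Or.inr hp.le)).tendsto.const_mul K)
  rw [zero_rpow hp.ne', mul_zero, ENNReal.ofReal_zero] at h
  exact tendsto_nhdsWithin_of_tendsto_nhds h

lemma iSup_ofReal_sq_le_of_eq_mul_setIntegral {D f : ℝ → ℝ} {a ε : ℝ}
    (hD : ∀ t, 0 ≤ t → D t = a * ∫ s in Ioc 0 (min t ε), s⁻¹ * f s) :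
    ⨆ t ∈ Ici (0 : ℝ), ENNReal.ofReal (D t ^ 2) ≤
      ENNReal.ofReal (a ^ 2) * (∫⁻ s in Ioc 0 ε, ENNReal.ofReal (s⁻¹ * |f s|)) ^ 2 := by
  refine iSup₂_le fun t ht => ?_
  rw [hD t ht, mul_pow, ENNReal.ofReal_mul (sq_nonneg a)]
  gcongr
  exact ofReal_sq_setIntegral_inv_mul_le (min_le_right t ε)

lemma lintegral_ofReal_sq_const_mul_rpow_mul {Ω : Type*} [MeasurableSpace Ω] {P : Measure Ω}
    {X : Ω → ℝ} (hX : MemLp X 2 P) {c σ2 H s : ℝ} (hs : 0 < s)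
    (hvar : ∫ ω, X ω * X ω ∂P = σ2 * s ^ (2 - 2 * H)) :
    ∫⁻ ω, ENNReal.ofReal ((c * s ^ (2 * H - 1) * X ω) ^ 2) ∂P =
      ENNReal.ofReal (c ^ 2 * σ2 * s ^ (2 * H)) := by
  have hpow : (s ^ (2 * H - 1)) ^ 2 * s ^ (2 - 2 * H) = s ^ (2 * H) := by
    rw [← rpow_natCast, ← rpow_mul hs.le, ← rpow_add hs]
    ring_nf
  rw [← ofReal_integral_eq_lintegral_ofReal ((hX.const_mul _).integrable_sq)
    (ae_of_all _ fun ω => sq_nonneg _)]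
  simp_rw [mul_pow, integral_const_mul, sq, hvar]
  congr 1
  rw [← hpow]
  ring

theorem stmt12_general
    {Ω : Type*} [MeasurableSpace Ω] (P : Measure Ω) [IsProbabilityMeasure P]
    (H c_M c_Ψ : ℝ) (hH : H ∈ Set.Ioo (0 : ℝ) 1)
    (M V : ℝ → Ω → ℝ) (Vε : ℝ → ℝ → Ω → ℝ)
    (hMmeas : Measurable (Function.uncurry M))
    (hML2 : ∀ s : ℝ, 0 ≤ s → MemLp (M s) 2 P)
    (hcov : ∀ s r : ℝ, 0 ≤ s → 0 ≤ r →
      ∫ ω, M s ω * M r ω ∂P = c_M * (min s r) ^ (2 - 2 * H))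
    (hV : ∀ s ω, V s ω = c_Ψ * s ^ (2 * H - 1) * M s ω)
    (hdiff : ∀ ε : ℝ, 0 < ε → ∀ t : ℝ, 0 ≤ t → ∀ ω,
      V t ω - Vε ε t ω = (2 * H - 1) * ∫ s in Set.Ioc (0 : ℝ) (min t ε), s⁻¹ * V s ω) :
    (∀ ε : ℝ, 0 < ε →
      ∫⁻ ω, ⨆ t ∈ Set.Ici (0 : ℝ), ENNReal.ofReal ((V t ω - Vε ε t ω) ^ 2) ∂P
        ≤ ENNReal.ofReal (c_Ψ ^ 2 * c_M * (2 * H - 1) ^ 2 / H ^ 2 * ε ^ (2 * H)))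
    ∧ Tendsto
        (fun ε : ℝ =>
          ∫⁻ ω, ⨆ t ∈ Set.Ici (0 : ℝ), ENNReal.ofReal ((V t ω - Vε ε t ω) ^ 2) ∂P)
        (nhdsWithin 0 (Set.Ioi 0)) (nhds 0) := by
  have hH0 : 0 < H := hH.1
  have hVmeas : Measurable (uncurry V) := by
    rw [show uncurry V = fun p : ℝ × Ω => c_Ψ * p.1 ^ (2 * H - 1) * uncurry M p from
      funext fun p => hV p.1 p.2]
    fun_prop
  have hmom (s : ℝ) (hs : 0 < s) :
      ∫⁻ ω, ENNReal.ofReal (V s ω ^ 2) ∂P =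
        ENNReal.ofReal (c_Ψ ^ 2 * c_M * s ^ (2 * H)) := by
    simp_rw [hV]
    exact lintegral_ofReal_sq_const_mul_rpow_mul (hML2 s hs.le) hs
      (by rw [hcov s s hs.le hs.le, min_self])
  have hbound (ε : ℝ) (hε : 0 < ε) :
      ∫⁻ ω, ⨆ t ∈ Ici (0 : ℝ), ENNReal.ofReal ((V t ω - Vε ε t ω) ^ 2) ∂P
        ≤ ENNReal.ofReal (c_Ψ ^ 2 * c_M * (2 * H - 1) ^ 2 / H ^ 2 * ε ^ (2 * H)) :=
    calc _ ≤ ∫⁻ ω, ENNReal.ofReal ((2 * H - 1) ^ 2) *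
            (∫⁻ s in Ioc 0 ε, ENNReal.ofReal (s⁻¹ * |V s ω|)) ^ 2 ∂P :=
          lintegral_mono fun ω => iSup_ofReal_sq_le_of_eq_mul_setIntegral (hdiff ε hε · · ω)
      _ ≤ ENNReal.ofReal ((2 * H - 1) ^ 2) *
            ENNReal.ofReal (c_Ψ ^ 2 * c_M * (ε ^ H / H) ^ 2) := by
          rw [lintegral_const_mul' _ _ ENNReal.ofReal_ne_top]
          gcongr
          exact lintegral_sq_lintegral_inv_mul_abs_le hVmeas hH0 hε.le
            fun s hs => (hmom s hs.1).le
      _ = _ := by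
          rw [← ENNReal.ofReal_mul (sq_nonneg _), div_pow, ← rpow_mul_natCast hε.le]
          congr 1
          ring_nf
  exact ⟨hbound, tendsto_of_tendsto_of_tendsto_of_le_of_le' tendsto_const_nhds
    (tendsto_ofReal_mul_rpow_nhdsGT_zero _ (by positivity)) (Eventually.of_forall fun _ => zero_le)
    (eventually_nhdsWithin_of_forall hbound)⟩

/-- Let `V` be the Dobrić–Ojeda process (`V_s = c_Ψ s^(2H-1) M_s` with `M`
a centered Gaussian martingale, `E[M_s M_r] = c_M (min s r)^(2-2H)`) and `V^ε` the modified
process, whose difference satisfies `V_t - V^ε_t = (2H-1) ∫₀^{t∧ε} s⁻¹ V_s ds`. Then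
`E[sup_{t≥0} (V_t - V^ε_t)²] ≤ (c_Ψ² c_M (2H-1)²/H²) ε^(2H)`, and hence `V^ε → V`
uniformly in `t` in `L²` as `ε → 0⁺`. -/
theorem stmt12
    {Ω : Type*} [MeasurableSpace Ω] (P : Measure Ω) [IsProbabilityMeasure P]
    (H c_M c_Ψ : ℝ) (hH : H ∈ Set.Ioo (0 : ℝ) 1) (hcM : 0 < c_M) (hcΨ : 0 < c_Ψ)
    (M V : ℝ → Ω → ℝ) (Vε : ℝ → ℝ → Ω → ℝ)
    (hMmeas : Measurable (Function.uncurry M))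
    (hML2 : ∀ s : ℝ, 0 ≤ s → MemLp (M s) 2 P)
    (hcov : ∀ s r : ℝ, 0 ≤ s → 0 ≤ r →
      ∫ ω, M s ω * M r ω ∂P = c_M * (min s r) ^ (2 - 2 * H))
    (hV : ∀ s ω, V s ω = c_Ψ * s ^ (2 * H - 1) * M s ω)
    (hdiff : ∀ ε : ℝ, 0 < ε → ∀ t : ℝ, 0 ≤ t → ∀ ω,
      V t ω - Vε ε t ω = (2 * H - 1) * ∫ s in Set.Ioc (0 : ℝ) (min t ε), s⁻¹ * V s ω) :
    (∀ ε : ℝ, 0 < ε →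
      ∫⁻ ω, ⨆ t ∈ Set.Ici (0 : ℝ), ENNReal.ofReal ((V t ω - Vε ε t ω) ^ 2) ∂P
        ≤ ENNReal.ofReal (c_Ψ ^ 2 * c_M * (2 * H - 1) ^ 2 / H ^ 2 * ε ^ (2 * H)))
    ∧ Tendsto
        (fun ε : ℝ =>
          ∫⁻ ω, ⨆ t ∈ Set.Ici (0 : ℝ), ENNReal.ofReal ((V t ω - Vε ε t ω) ^ 2) ∂P)
        (nhdsWithin 0 (Set.Ioi 0)) (nhds 0) :=
  stmt12_general P H c_M c_Ψ hH M V Vε hMmeas hML2 hcov hV hdiff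
end

section
/- Let M_t be a centered Gaussian martingale with quadratic variation c_M t^{2-2H}, and write M_t = B_{c_M t^{2-2H}} for a Brownian motion B via time change. Let b, c_M > 0 and 0 < ε < t with 2 b² c_M ln(t/ε) < 1. Then E[exp(b² ∫_ε^t s^{2H-3} M_s² ds)] < ∞. -/
open MeasureTheory ProbabilityTheory Real
open scoped ENNReal NNReal

/-!
Write `r s = c_M s^(2-2H)` for the variance of `M_s`, so that
`s^(2H-3) M_s² = (c_M / s) · M_s² / r s`. Since `ds / (s log(t/ε))` is a probability measure `ν`
on `(ε, t]`, with `θ = 2 b² c_M log(t/ε) < 1` the exponent is `∫ θ M_s² / (2 r s) dν(s)`.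
Jensen's inequality for `exp` under `ν`, followed by Tonelli, bounds the expectation by
`∫ E[exp(θ M_s² / (2 r s))] dν(s)`, and each of these Gaussian expectations is `(1 - θ)^(-1/2)`.
-/

section Jensen

variable {X Ω : Type*} [MeasurableSpace X] [MeasurableSpace Ω]

theorem ofReal_exp_integral_le_lintegral (ν : Measure X) [IsProbabilityMeasure ν] {g : X → ℝ}
    (hg : Integrable g ν) (hexp : Integrable (fun x => exp (g x)) ν) :
    ENNReal.ofReal (exp (∫ x, g x ∂ν)) ≤ ∫⁻ x, ENNReal.ofReal (exp (g x)) ∂ν := by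
  rw [← ofReal_integral_eq_lintegral_ofReal hexp (ae_of_all _ fun x => (exp_pos _).le)]
  exact ENNReal.ofReal_le_ofReal <| convexOn_exp.map_integral_le continuousOn_exp isClosed_univ
    (ae_of_all _ fun _ => trivial) hg hexp

theorem lintegral_ofReal_exp_integral_le (ν : Measure X) [IsProbabilityMeasure ν]
    (P : Measure Ω) [SFinite P] {f : X → Ω → ℝ} (hf : Measurable (Function.uncurry f))
    (hfi : ∀ ω, Integrable (f · ω) ν) (hexp : ∀ ω, Integrable (fun x => exp (f x ω)) ν) :
    ∫⁻ ω, ENNReal.ofReal (exp (∫ x, f x ω ∂ν)) ∂P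
      ≤ ∫⁻ x, ∫⁻ ω, ENNReal.ofReal (exp (f x ω)) ∂P ∂ν :=
  calc ∫⁻ ω, ENNReal.ofReal (exp (∫ x, f x ω ∂ν)) ∂P
      ≤ ∫⁻ ω, ∫⁻ x, ENNReal.ofReal (exp (f x ω)) ∂ν ∂P :=
        lintegral_mono fun ω => ofReal_exp_integral_le_lintegral ν (hfi ω) (hexp ω)
    _ = ∫⁻ x, ∫⁻ ω, ENNReal.ofReal (exp (f x ω)) ∂P ∂ν :=
        lintegral_lintegral_swap <| Measurable.aemeasurable <| by
          change Measurable fun p : Ω × X => ENNReal.ofReal (exp (f p.2 p.1))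
          fun_prop

end Jensen

theorem lintegral_exp_mul_sq_gaussianReal {v : ℝ≥0} (hv : v ≠ 0) {θ : ℝ} (hθ : θ < 1) :
    ∫⁻ x, ENNReal.ofReal (exp (θ * x ^ 2 / (2 * v))) ∂gaussianReal 0 v
      = ENNReal.ofReal (√(1 - θ))⁻¹ := by
  have hv0 : (0 : ℝ) < v := by positivity
  set c : ℝ := (1 - θ) / (2 * v)
  have hc : 0 < c := div_pos (by linarith) (by positivity)
  have hdensity : ∀ x : ℝ, gaussianPDF 0 v x * ENNReal.ofReal (exp (θ * x ^ 2 / (2 * v)))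
      = ENNReal.ofReal (√(2 * π * v))⁻¹ * ENNReal.ofReal (exp (-c * x ^ 2)) := by
    intro x
    rw [gaussianPDF, gaussianPDFReal, ← ENNReal.ofReal_mul (by positivity),
      ← ENNReal.ofReal_mul (by positivity), mul_assoc, ← exp_add]
    congr 3
    simp only [c]
    field_simp
    ring
  rw [gaussianReal_of_var_ne_zero _ hv, lintegral_withDensity_eq_lintegral_mul _
    (measurable_gaussianPDF _ _) (by fun_prop)]
  simp only [Pi.mul_apply, hdensity]
  rw [lintegral_const_mul' _ _ ENNReal.ofReal_ne_top,
    ← ofReal_integral_eq_lintegral_ofReal (integrable_exp_neg_mul_sq hc)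
      (ae_of_all _ fun x => (exp_pos _).le),
    integral_gaussian, ← ENNReal.ofReal_mul (by positivity)]
  congr 1
  rw [← sqrt_inv, ← sqrt_inv, ← sqrt_mul (by positivity)]
  congr 1
  simp only [c]
  field_simp

theorem lintegral_exp_mul_sq_of_map_eq_gaussianReal {Ω : Type*} [MeasurableSpace Ω]
    {P : Measure Ω} {Y : Ω → ℝ} (hY : Measurable Y) {v : ℝ} (hv : 0 < v)
    (hmap : P.map Y = gaussianReal 0 v.toNNReal) {θ : ℝ} (hθ : θ < 1) :
    ∫⁻ ω, ENNReal.ofReal (exp (θ * Y ω ^ 2 / (2 * v))) ∂P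
      = ENNReal.ofReal (√(1 - θ))⁻¹ := by
  have hvv : (v.toNNReal : ℝ) = v := Real.coe_toNNReal _ hv.le
  rw [← lintegral_map (f := fun x => ENNReal.ofReal (exp (θ * x ^ 2 / (2 * v))))
    (by fun_prop) hY, hmap]
  simpa only [hvv] using lintegral_exp_mul_sq_gaussianReal (Real.toNNReal_pos.mpr hv).ne' hθ

theorem lintegral_exp_integral_sq_div_le {T Ω : Type*} [MeasurableSpace T] [MeasurableSpace Ω]
    (ν : Measure T) [IsProbabilityMeasure ν] (P : Measure Ω) [SFinite P]
    {Y : T → Ω → ℝ} (hY : Measurable (Function.uncurry Y)) {v : T → ℝ} (hv : Measurable v)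
    (hv0 : ∀ᵐ s ∂ν, 0 < v s) (hmap : ∀ᵐ s ∂ν, P.map (Y s) = gaussianReal 0 (v s).toNNReal)
    {θ : ℝ} (hθ : θ < 1) (hint : ∀ ω, Integrable (fun s => θ * Y s ω ^ 2 / (2 * v s)) ν)
    (hexp : ∀ ω, Integrable (fun s => exp (θ * Y s ω ^ 2 / (2 * v s))) ν) :
    ∫⁻ ω, ENNReal.ofReal (exp (∫ s, θ * Y s ω ^ 2 / (2 * v s) ∂ν)) ∂P
      ≤ ENNReal.ofReal (√(1 - θ))⁻¹ :=
  calc ∫⁻ ω, ENNReal.ofReal (exp (∫ s, θ * Y s ω ^ 2 / (2 * v s) ∂ν)) ∂P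
      ≤ ∫⁻ s, ∫⁻ ω, ENNReal.ofReal (exp (θ * Y s ω ^ 2 / (2 * v s))) ∂P ∂ν :=
        lintegral_ofReal_exp_integral_le ν P (f := fun s ω => θ * Y s ω ^ 2 / (2 * v s))
          (by fun_prop) hint hexp
    _ = ∫⁻ _, ENNReal.ofReal (√(1 - θ))⁻¹ ∂ν := lintegral_congr_ae <| by
        filter_upwards [hv0, hmap] with s hs hs'
        exact lintegral_exp_mul_sq_of_map_eq_gaussianReal hY.of_uncurry_left hs hs' hθ
    _ = ENNReal.ofReal (√(1 - θ))⁻¹ := by simp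

noncomputable def logUniform (ε t : ℝ) : Measure ℝ :=
  (volume.restrict (Set.Ioc ε t)).withDensity fun s => ((log (t / ε) * s)⁻¹).toNNReal

section logUniform

variable {ε t : ℝ}

theorem integral_logUniform (hε : 0 < ε) (g : ℝ → ℝ) :
    ∫ s, g s ∂logUniform ε t = (log (t / ε))⁻¹ * ∫ s in Set.Ioc ε t, g s / s := by
  rw [logUniform, integral_withDensity_eq_integral_smul (by fun_prop), ← integral_const_mul]
  refine setIntegral_congr_fun measurableSet_Ioc fun s hs => ?_
  have hs0 : 0 < s := hε.trans hs.1
  have hL : 0 < log (t / ε) := log_pos ((one_lt_div hε).mpr (hs.1.trans_le hs.2))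
  rw [NNReal.smul_def, smul_eq_mul, Real.coe_toNNReal _ (by positivity)]
  ring

theorem isProbabilityMeasure_logUniform (hε : 0 < ε) (hεt : ε < t) :
    IsProbabilityMeasure (logUniform ε t) := by
  have hL : 0 < log (t / ε) := log_pos ((one_lt_div hε).mpr hεt)
  have hdensity : IntegrableOn (fun s => (log (t / ε) * s)⁻¹) (Set.Ioc ε t) :=
    (ContinuousOn.integrableOn_Icc <| ContinuousOn.inv₀ (by fun_prop) fun s hs =>
      (mul_pos hL (hε.trans_le hs.1)).ne').mono_set Set.Ioc_subset_Icc_self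
  constructor
  rw [logUniform, withDensity_apply _ MeasurableSet.univ, Measure.restrict_univ]
  change ∫⁻ s in Set.Ioc ε t, ENNReal.ofReal (log (t / ε) * s)⁻¹ = 1
  rw [← ofReal_integral_eq_lintegral_ofReal hdensity
    ((ae_restrict_iff' measurableSet_Ioc).mpr (ae_of_all _ fun s hs => by
      have := hε.trans hs.1; positivity)),
    ← intervalIntegral.integral_of_le hεt.le]
  simp_rw [mul_inv]
  rw [intervalIntegral.integral_const_mul, integral_inv_of_pos hε (hε.trans hεt),
    inv_mul_cancel₀ hL.ne', ENNReal.ofReal_one]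

theorem ae_mem_Ioc_logUniform : ∀ᵐ s ∂logUniform ε t, s ∈ Set.Ioc ε t :=
  (withDensity_absolutelyContinuous _ _).ae_le (ae_restrict_mem measurableSet_Ioc)

theorem ContinuousOn.integrable_logUniform (hε : 0 < ε) (hεt : ε < t) {g : ℝ → ℝ}
    (hg : ContinuousOn g (Set.Icc ε t)) : Integrable g (logUniform ε t) := by
  have := isProbabilityMeasure_logUniform hε hεt
  rw [← Measure.restrict_eq_self_of_ae_mem
    (ae_mem_Ioc_logUniform.mono fun _ hs => Set.Ioc_subset_Icc_self hs)]
  exact hg.integrableOn_compact isCompact_Icc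

end logUniform

theorem rpow_two_mul_sub_three {s : ℝ} (hs : 0 < s) (H : ℝ) :
    s ^ (2 * H - 3) = (s ^ (2 - 2 * H) * s)⁻¹ := by
  rw [← rpow_add_one hs.ne', ← rpow_neg hs.le]
  ring_nf

theorem stmt13_general
    {Ω : Type*} [MeasurableSpace Ω] (P : Measure Ω) [IsProbabilityMeasure P]
    (H c_M b : ℝ) (hcM : 0 < c_M)
    (B M : ℝ → Ω → ℝ)
    (hBmeas : Measurable (Function.uncurry B))
    (hBgauss : ∀ r : ℝ, 0 ≤ r → Measure.map (B r) P = gaussianReal 0 r.toNNReal)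
    (htime : ∀ s : ℝ, 0 ≤ s → ∀ ω, M s ω = B (c_M * s ^ (2 - 2 * H)) ω)
    (hMcont : ∀ ω, Continuous fun s => M s ω)
    (ε t : ℝ) (hε : 0 < ε) (hεt : ε < t)
    (hsmall : 2 * b ^ 2 * c_M * Real.log (t / ε) < 1) :
    ∫⁻ ω, ENNReal.ofReal
        (Real.exp (b ^ 2 * ∫ s in Set.Ioc ε t, s ^ (2 * H - 3) * (M s ω) ^ 2)) ∂P < ⊤ := by
  set θ := 2 * b ^ 2 * c_M * log (t / ε)
  set r : ℝ → ℝ := fun s => c_M * s ^ (2 - 2 * H)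
  have hr : ∀ s ∈ Set.Icc ε t, 0 < r s := fun s hs =>
    mul_pos hcM (rpow_pos_of_pos (hε.trans_le hs.1) _)
  have := isProbabilityMeasure_logUniform hε hεt
  have hcont : ∀ ω, ContinuousOn (fun s => θ * B (r s) ω ^ 2 / (2 * r s)) (Set.Icc ε t) := by
    intro ω
    have hBc : ContinuousOn (fun s => B (r s) ω) (Set.Icc ε t) :=
      (hMcont ω).continuousOn.congr fun s hs => (htime s (hε.le.trans hs.1) ω).symm
    have hrc : ContinuousOn r (Set.Icc ε t) := continuousOn_const.mul
      (continuousOn_id.rpow_const fun s hs => Or.inl (hε.trans_le hs.1).ne')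
    exact (continuousOn_const.mul (hBc.pow 2)).div (continuousOn_const.mul hrc)
      fun s hs => (mul_pos two_pos (hr s hs)).ne'
  have hintegral : ∀ ω, b ^ 2 * ∫ s in Set.Ioc ε t, s ^ (2 * H - 3) * M s ω ^ 2
      = ∫ s, θ * B (r s) ω ^ 2 / (2 * r s) ∂logUniform ε t := by
    intro ω
    have hL : 0 < log (t / ε) := log_pos ((one_lt_div hε).mpr hεt)
    rw [integral_logUniform hε, ← integral_const_mul, ← integral_const_mul]
    refine setIntegral_congr_fun measurableSet_Ioc fun s hs => ?_
    have hs0 : 0 < s := hε.trans hs.1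
    simp only [r, θ, htime s hs0.le ω, rpow_two_mul_sub_three hs0]
    field_simp
  have hr_ae : ∀ᵐ s ∂logUniform ε t, 0 < r s :=
    ae_mem_Ioc_logUniform.mono fun s hs => hr s (Set.Ioc_subset_Icc_self hs)
  have hY : Measurable (Function.uncurry fun s ω => B (r s) ω) :=
    hBmeas.comp ((by fun_prop : Measurable fun p : ℝ × Ω => r p.1).prodMk measurable_snd)
  simp_rw [hintegral]
  refine (lintegral_exp_integral_sq_div_le _ P hY (by fun_prop) hr_ae
    (hr_ae.mono fun s hs => hBgauss _ hs.le) hsmall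
    (fun ω => (hcont ω).integrable_logUniform hε hεt)
    (fun ω => (continuousOn_exp.comp (hcont ω) (Set.mapsTo_univ _ _)).integrable_logUniform hε hεt)
    ).trans_lt ENNReal.ofReal_lt_top

/-- Let `M` be a centered Gaussian martingale with quadratic variation
`c_M t^(2-2H)`, written via time change as `M_t = B_{c_M t^(2-2H)}` for a Brownian motion
`B` (modelled by its Gaussian marginals `B_r ~ N(0, r)`). Let `b, c_M > 0` and `0 < ε < t`
with `2 b² c_M ln(t/ε) < 1`. Then `E[exp(b² ∫_ε^t s^(2H-3) M_s² ds)] < ∞`. -/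
theorem stmt13
    {Ω : Type*} [MeasurableSpace Ω] (P : Measure Ω) [IsProbabilityMeasure P]
    (H c_M b : ℝ) (hH : H ∈ Set.Ioo (0 : ℝ) 1) (hcM : 0 < c_M) (hb : 0 < b)
    (B M : ℝ → Ω → ℝ)
    (hBmeas : Measurable (Function.uncurry B))
    (hBgauss : ∀ r : ℝ, 0 ≤ r → Measure.map (B r) P = gaussianReal 0 r.toNNReal)
    (htime : ∀ s : ℝ, 0 ≤ s → ∀ ω, M s ω = B (c_M * s ^ (2 - 2 * H)) ω)
    (hMcont : ∀ ω, Continuous fun s => M s ω)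
    (ε t : ℝ) (hε : 0 < ε) (hεt : ε < t)
    (hsmall : 2 * b ^ 2 * c_M * Real.log (t / ε) < 1) :
    ∫⁻ ω, ENNReal.ofReal
        (Real.exp (b ^ 2 * ∫ s in Set.Ioc ε t, s ^ (2 * H - 3) * (M s ω) ^ 2)) ∂P < ⊤ :=
  stmt13_general P H c_M b hcM B M hBmeas hBgauss htime hMcont ε t hε hεt hsmall
end
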